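/- arXiv:1411.1122 — 2 statements merged into one kernel-verified Lean document; each statement's English description precedes it below -/
import Mathlib

section
/- Let n be an integer with n ≥ 2, let k be the smallest nonnegative integer satisfying 2^k ≥ n / log₂ n, and let m = ⌈n / k⌉. Then m = O(n / log n); that is, there exists a constant c > 0 such that for every integer n ≥ 2, m ≤ c · n / log₂ n. -/
/-- For all positive `x`, `log₂ x ≤ (3/4) x`. -/
lemma logb_two_le_three_quarters (x : ℝ) (hx : 0 < x) :
    Real.logb 2 x ≤ 3 / 4 * x := by
  rw [Real.logb, div_le_iff₀ (Real.log_pos one_lt_two)]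
  have ht : 0 < Real.sqrt x := Real.sqrt_pos.2 hx
  have h1 : Real.log x = 2 * Real.log (Real.sqrt x) := by
    rw [Real.log_sqrt hx.le]; ring
  have h2 : Real.log (Real.sqrt x) ≤ Real.sqrt x - 1 :=
    Real.log_le_sub_one_of_pos ht
  have hs : Real.sqrt x ^ 2 = x := Real.sq_sqrt hx.le
  have hlog2 : (2 : ℝ) / 3 ≤ Real.log 2 := by
    have := Real.log_two_gt_d9
    linarith
  nlinarith [sq_nonneg (Real.sqrt x - 2), sq_nonneg (Real.sqrt x)]

/-- Lemma 3.1: if `k` is the smallest natural number with `2^k ≥ n / log₂ n` and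
`m = ⌈n / k⌉`, then `m = O(n / log n)`: there is a constant `c > 0` such that
for every integer `n ≥ 2`, `m ≤ c · n / log₂ n`. -/
theorem m_is_O_n_div_log :
    ∃ c : ℝ, 0 < c ∧
      ∀ n : ℕ, 2 ≤ n →
        ∀ k : ℕ, IsLeast {j : ℕ | (n : ℝ) / Real.logb 2 n ≤ (2 : ℝ) ^ j} k →
          (⌈(n : ℝ) / (k : ℝ)⌉ : ℝ) ≤ c * n / Real.logb 2 n := by
  refine ⟨5, by norm_num, fun n hn k hk => ?_⟩
  have hn2 : (2 : ℝ) ≤ (n : ℝ) := by exact_mod_cast hn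
  set L := Real.logb 2 n with hLdef
  have hL1 : 1 ≤ L := by
    have : Real.logb 2 2 ≤ Real.logb 2 n :=
      Real.logb_le_logb_of_le (by norm_num) (by norm_num) hn2
    simpa using this
  have hL0 : 0 < L := lt_of_lt_of_le one_pos hL1
  have hnpos : (0 : ℝ) < n := by linarith
  have hmem : (n : ℝ) / L ≤ (2 : ℝ) ^ k := hk.1
  have hdivpos : 0 < (n : ℝ) / L := div_pos hnpos hL0
  -- k ≥ log₂(n/L) = L - log₂ L ≥ L/4
  have hklog : Real.logb 2 ((n : ℝ) / L) ≤ (k : ℝ) := by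
    calc Real.logb 2 ((n : ℝ) / L) ≤ Real.logb 2 ((2 : ℝ) ^ k) :=
          Real.logb_le_logb_of_le (by norm_num) hdivpos hmem
      _ = (k : ℝ) := by
          rw [Real.logb_pow]
          simp
  have hsplit : Real.logb 2 ((n : ℝ) / L) = L - Real.logb 2 L := by
    rw [Real.logb_div (ne_of_gt hnpos) (ne_of_gt hL0)]
  have hbound : Real.logb 2 L ≤ 3 / 4 * L := logb_two_le_three_quarters L hL0
  have hk4 : L / 4 ≤ (k : ℝ) := by
    rw [hsplit] at hklog
    linarith
  have hkpos : (0 : ℝ) < (k : ℝ) := lt_of_lt_of_le (by linarith) hk4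
  have hLlen : L ≤ (n : ℝ) := by
    have := logb_two_le_three_quarters (n : ℝ) hnpos
    linarith
  have h1len : (1 : ℝ) ≤ (n : ℝ) / L := (one_le_div hL0).2 hLlen
  have hdiv : (n : ℝ) / (k : ℝ) ≤ 4 * (n : ℝ) / L := by
    have h4 : (0 : ℝ) < L / 4 := by linarith
    have := div_le_div_of_nonneg_left hnpos.le h4 hk4
    calc (n : ℝ) / (k : ℝ) ≤ (n : ℝ) / (L / 4) := by
          exact div_le_div_of_nonneg_left hnpos.le h4 hk4
      _ = 4 * (n : ℝ) / L := by field_simp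
  have hceil : (⌈(n : ℝ) / (k : ℝ)⌉ : ℝ) < (n : ℝ) / (k : ℝ) + 1 :=
    Int.ceil_lt_add_one _
  have : (⌈(n : ℝ) / (k : ℝ)⌉ : ℝ) ≤ 4 * (n : ℝ) / L + (n : ℝ) / L := by
    linarith
  calc (⌈(n : ℝ) / (k : ℝ)⌉ : ℝ) ≤ 4 * (n : ℝ) / L + (n : ℝ) / L := this
    _ = 5 * (n : ℝ) / L := by ring
end

section
/- Let n be an integer with n ≥ 2, let k be the smallest nonnegative integer satisfying 2^k ≥ n / log₂ n, and let m = ⌈n / k⌉. Then m ≤ 3n / log₂ n. -/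
/-!
Write `L = log₂ n`. Since `n / L ≤ 2 ^ k`, taking logarithms gives `k ≥ L - log₂ L`, and this
forces `k ≥ L / 2`: for `L > 4` because `log₂ L < L / 2` there, and for `2 < L ≤ 4` because
`log₂ L < L - 1` makes `k ≥ 2`. Hence `⌈n / k⌉ < n / k + 1 ≤ 2n / L + n / L`, using `n / L ≥ 1`.
-/

open Real

/-- The tangent-line bound `log y ≤ y - 1` at `y = x / c`, with `1 / log 2 < 2`. -/
theorem logb_two_lt_logb_two_add {c x : ℝ} (hc : 0 < c) (hcx : c < x) :
    logb 2 x < logb 2 c + 2 * (x / c - 1) := by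
  have hx : 0 < x := hc.trans hcx
  have hlog2 : 1 / 2 < log 2 := by linarith [log_two_gt_d9]
  have hratio : 0 < x / c - 1 := by rw [sub_pos, one_lt_div hc]; exact hcx
  have htangent : log (x / c) ≤ x / c - 1 := log_le_sub_one_of_pos (by positivity)
  have hdiff : logb 2 x - logb 2 c = log (x / c) / log 2 := by
    rw [← logb_div (by positivity) hc.ne', logb]
  have : log (x / c) / log 2 < 2 * (x / c - 1) := by
    rw [div_lt_iff₀ (by linarith)]
    nlinarith
  linarith

theorem half_le_of_sub_logb_two_le {L : ℝ} {k : ℕ} (hk : 1 ≤ k) (h : L - logb 2 L ≤ k) :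
    L / 2 ≤ k := by
  have hk' : (1 : ℝ) ≤ k := by exact_mod_cast hk
  rcases le_or_gt L 2 with hL2 | hL2
  · linarith
  rcases le_or_gt L 4 with hL4 | hL4
  · have hlog : logb 2 L < logb 2 2 + 2 * (L / 2 - 1) :=
      logb_two_lt_logb_two_add two_pos hL2
    rw [logb_self_eq_one one_lt_two] at hlog
    have hk2 : (2 : ℝ) ≤ k := by
      have : 1 < k := by exact_mod_cast (show (1 : ℝ) < k by linarith)
      exact_mod_cast this
    linarith
  · have hlog : logb 2 L < logb 2 4 + 2 * (L / 4 - 1) :=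
      logb_two_lt_logb_two_add four_pos hL4
    have hlog4 : logb 2 4 = 2 := by
      rw [show (4 : ℝ) = 2 ^ (2 : ℝ) by norm_num, logb_rpow two_pos one_lt_two.ne']
    linarith

theorem sub_logb_two_le_of_div_le_two_pow {x y : ℝ} {k : ℕ} (hx : 0 < x) (hy : 0 < y)
    (h : x / y ≤ 2 ^ k) : logb 2 x - logb 2 y ≤ k := by
  rw [← logb_div hx.ne' hy.ne', logb_le_iff_le_rpow one_lt_two (by positivity), rpow_natCast]
  exact h

/-- Explicit bound from the proof of Lemma 3.1: if `k` is the smallest natural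
number with `2^k ≥ n / log₂ n` and `m = ⌈n / k⌉`, then for every integer
`n ≥ 2`, `m ≤ 3n / log₂ n`. -/
theorem m_le_three_n_div_log (n : ℕ) (hn : 2 ≤ n)
    (k : ℕ) (hk : IsLeast {j : ℕ | (n : ℝ) / Real.logb 2 n ≤ (2 : ℝ) ^ j} k) :
    (⌈(n : ℝ) / (k : ℝ)⌉ : ℝ) ≤ 3 * n / Real.logb 2 n := by
  have hn' : (2 : ℝ) ≤ n := by exact_mod_cast hn
  set L := logb 2 n
  have hL : 1 ≤ L := by rw [le_logb_iff_rpow_le one_lt_two (by positivity)]; simpa using hn'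
  have hLn : L < n := by
    rw [logb_lt_iff_lt_rpow one_lt_two (by positivity), rpow_natCast]
    exact_mod_cast n.lt_two_pow_self
  have hnL : 1 < n / L := (one_lt_div (by positivity)).2 hLn
  have hk1 : 1 ≤ k := by
    by_contra! hk0
    have hmem := hk.1
    simp only [Nat.lt_one_iff.mp hk0, Set.mem_ofPred_eq, pow_zero] at hmem
    linarith
  have hkL : L / 2 ≤ k := half_le_of_sub_logb_two_le hk1 <|
    sub_logb_two_le_of_div_le_two_pow (by positivity) (by positivity) hk.1
  calc (⌈(n : ℝ) / k⌉ : ℝ) ≤ n / k + 1 := (Int.ceil_lt_add_one _).le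
    _ ≤ n / (L / 2) + n / L := by gcongr
    _ = 3 * n / L := by field_simp; ring
end
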